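/- arXiv:1907.06019 — 2 statements merged into one kernel-verified Lean document; each statement's English description precedes it below -/
import Mathlib

section
/- Let V = ℝ^n, let d ≥ 0 and 0 < r ≤ n - d, let W be a linear subspace of ⋀^r V, and let F be an invertible n×n real matrix. Then there exists a subset J of {1,…,n} with |J| = n - d such that dim π^F_J(W) / C(n-d, r) ≥ (dim W) / C(n, r). -/
/-!
Let `f_K` (`|K| = r`) be the wedge basis of `⋀^r V` built from the columns of `F`, with
coordinate functionals `φ_K`. The map induced by `π^F_J` sends `f_K` to `f_K` if `K ⊆ J` and
to `0` otherwise, so `φ_K ∘ π^F_J = φ_K` whenever `K ⊆ J`. Pick a set `S` of `dim W` indices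
whose coordinates restrict to a basis of `W^*`; for every `J`, the `φ_K` with `K ∈ S`, `K ⊆ J`
stay independent on `π^F_J(W)`, so `dim π^F_J(W) ≥ #{K ∈ S | K ⊆ J}`. Each `K` lies in
`C(n-r, m-r)` of the `C(n, m)` sets `J` of size `m = n - d`, and
`C(n,m) C(m,r) = C(n,r) C(n-r,m-r)`, so on average, hence for some `J`,
`#{K ∈ S | K ⊆ J} ≥ dim W · C(m,r) / C(n,r)`.
-/

/-- The projection `π^F_J : ℝ^n → span{f_j : j ∈ J}` determined by the columns
`f_1, …, f_n` of `F`: it fixes `f_j` for `j ∈ J` and kills `f_j` for `j ∉ J`. -/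
noncomputable def projMap (n : ℕ) (F : Matrix (Fin n) (Fin n) ℝ) (J : Finset (Fin n)) :
    (Fin n → ℝ) →ₗ[ℝ] (Fin n → ℝ) :=
  Matrix.toLin' (F * Matrix.diagonal (fun j => if j ∈ J then (1 : ℝ) else 0) * F⁻¹)

/-- The image of a subspace `W` of the exterior algebra under the map induced by
`π^F_J`. -/
noncomputable def projImage (n : ℕ) (F : Matrix (Fin n) (Fin n) ℝ) (J : Finset (Fin n))
    (W : Submodule ℝ (ExteriorAlgebra ℝ (Fin n → ℝ))) :
    Submodule ℝ (ExteriorAlgebra ℝ (Fin n → ℝ)) :=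
  Submodule.map (ExteriorAlgebra.map (projMap n F J)).toLinearMap W

open Module Finset
open scoped Matrix

theorem Submodule.finrank_comap_subtype_of_le {R M : Type*} [Ring R] [AddCommGroup M]
    [Module R M] {p W : Submodule R M} (hW : W ≤ p) :
    finrank R (W.comap p.subtype) = finrank R W := by
  rw [← Submodule.finrank_map_subtype_eq, Submodule.map_comap_subtype, inf_eq_right.mpr hW]

section Combinatorics

variable {I : Type*} [Fintype I] [DecidableEq I]

theorem exists_card_mul_choose_le_card_filter_subset_mul {S : Finset (Finset I)} {r m : ℕ}
    (hS : ∀ K ∈ S, K.card = r) (hrm : r ≤ m) (hm : m ≤ Fintype.card I) :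
    ∃ J : Finset I, J.card = m ∧
      #S * m.choose r ≤ #(S.filter (· ⊆ J)) * (Fintype.card I).choose r := by
  set N := Fintype.card I
  have hsum : ∑ J ∈ powersetCard m univ, #(S.filter (· ⊆ J)) = #S * (N - r).choose (m - r) := by
    simp only [card_filter]
    rw [sum_comm, ← smul_eq_mul, ← sum_const]
    refine sum_congr rfl fun K hK => ?_
    rw [← card_filter, card_filter_powersetCard_subset K univ m (subset_univ K)
      ((hS K hK).symm ▸ hrm), card_univ, hS K hK]
  have hne : (powersetCard m (univ : Finset I)).Nonempty :=
    powersetCard_nonempty.mpr (by rwa [card_univ])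
  obtain ⟨J, hJ, hle⟩ := exists_le_of_sum_le hne
    (f := fun _ => #S * m.choose r) (g := fun J => #(S.filter (· ⊆ J)) * N.choose r) <| by
      rw [sum_const, ← sum_mul, hsum, card_powersetCard, card_univ, smul_eq_mul]
      refine le_of_eq ?_
      rw [mul_left_comm, Nat.choose_mul hrm]
      ring
  exact ⟨J, (mem_powersetCard.mp hJ).2, hle⟩

end Combinatorics

section Dual

variable {K E : Type*} [Field K] [AddCommGroup E] [Module K E]

theorem exists_finset_linearIndepOn_card_eq_finrank {ι : Type*} [Finite ι] {v : ι → E}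
    (hv : Submodule.span K (Set.range v) = ⊤) :
    ∃ s : Finset ι, LinearIndepOn K v s ∧ s.card = finrank K E := by
  obtain ⟨b, -, -, hspan, hind⟩ :=
    exists_linearIndepOn_extension (linearIndepOn_empty K v) (Set.empty_subset Set.univ)
  have hb : b.Finite := b.toFinite
  have htop : Submodule.span K (Set.range fun x : hb.toFinset => v x) = ⊤ := by
    rw [eq_top_iff, ← hv, Submodule.span_le, ← Set.image_univ]
    refine hspan.trans (Submodule.span_mono ?_)
    rintro _ ⟨i, hi, rfl⟩
    exact ⟨⟨i, hb.mem_toFinset.mpr hi⟩, rfl⟩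
  have hs : LinearIndepOn K v hb.toFinset := by simpa using hind
  refine ⟨hb.toFinset, hs, ?_⟩
  rw [← finrank_top K E, ← htop]
  exact ((finrank_span_eq_card hs).trans (Fintype.card_coe _)).symm

theorem Module.Basis.exists_finset_linearIndepOn_dualMap_coord {ι : Type*} [Finite ι]
    (B : Basis ι K E) (W : Submodule K E) :
    ∃ s : Finset ι, LinearIndepOn K (fun i => W.subtype.dualMap (B.coord i)) s ∧
      s.card = finrank K W := by
  classical
  have := B.finiteDimensional_of_finite
  rw [← Subspace.dual_finrank_eq]
  apply exists_finset_linearIndepOn_card_eq_finrank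
  have hrange : Set.range (fun i => W.subtype.dualMap (B.coord i)) =
      W.subtype.dualMap '' Set.range B.dualBasis := by
    rw [← Set.range_comp, Basis.coe_dualBasis]; rfl
  rw [hrange, Submodule.span_image, B.dualBasis.span_eq, Submodule.map_top, LinearMap.range_eq_top]
  exact LinearMap.dualMap_surjective_of_injective W.injective_subtype

theorem LinearIndepOn.card_le_finrank_map [FiniteDimensional K E] {ι : Type*}
    {φ : ι → Dual K E} {W : Submodule K E} {s : Finset ι}
    (hs : LinearIndepOn K (fun i => W.subtype.dualMap (φ i)) s) (f : E →ₗ[K] E)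
    (hf : ∀ i ∈ s, φ i ∘ₗ f = φ i) :
    s.card ≤ finrank K (W.map f) := by
  have hind : LinearIndepOn K (fun i => (W.map f).subtype.dualMap (φ i)) s := by
    refine (hs.congr fun i hi => ?_).of_comp (f.submoduleMap W).dualMap
    ext w
    exact (LinearMap.congr_fun (hf i hi) w).symm
  calc s.card = Fintype.card s := (Fintype.card_coe s).symm
    _ ≤ finrank K (Dual K (W.map f)) := hind.fintype_card_le_finrank
    _ = finrank K (W.map f) := Subspace.dual_finrank_eq

end Dual

namespace exteriorPower

variable {R M N : Type*} [CommRing R] [AddCommGroup M] [Module R M] [AddCommGroup N] [Module R N]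

theorem subtype_comp_map (r : ℕ) (f : M →ₗ[R] N) :
    (⋀[R]^r N).subtype ∘ₗ map r f = (ExteriorAlgebra.map f).toLinearMap ∘ₗ (⋀[R]^r M).subtype :=
  linearMap_ext (by ext v; simp)

theorem finrank_map_comap_subtype (r : ℕ) (f : M →ₗ[R] N)
    {W : Submodule R (ExteriorAlgebra R M)} (hW : W ≤ ⋀[R]^r M) :
    finrank R ((W.comap (⋀[R]^r M).subtype).map (map r f)) =
      finrank R (W.map (ExteriorAlgebra.map f).toLinearMap) := by
  rw [← Submodule.finrank_map_subtype_eq, ← Submodule.map_comp, subtype_comp_map,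
    Submodule.map_comp, Submodule.map_comap_subtype, inf_eq_right.mpr hW]

variable {I : Type*} [LinearOrder I] {r : ℕ}

theorem map_basis_of_apply_basis (b : Basis I R M) {J : Finset I} {p : M →ₗ[R] M}
    (hp : ∀ i, p (b i) = if i ∈ J then b i else 0) (s : Set.powersetCard I r) :
    map r p (b.exteriorPower r s) = if (s : Finset I) ⊆ J then b.exteriorPower r s else 0 := by
  rw [basis_apply, map_apply_ιMulti_family, ιMulti_family, ιMulti_family]
  split_ifs with hs
  · congr 1
    funext k
    simp only [Function.comp_apply, hp,
      if_pos (hs ((Set.powersetCard.mem_range_ofFinEmbEquiv_symm_iff_mem s _).mp ⟨k, rfl⟩))]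
  · obtain ⟨i, his, hiJ⟩ := not_subset.mp hs
    obtain ⟨k, rfl⟩ := (Set.powersetCard.mem_range_ofFinEmbEquiv_symm_iff_mem s i).mpr his
    exact (ιMulti R r).map_coord_zero k (by simp [hp, hiJ])

theorem coord_comp_map_of_subset (b : Basis I R M) {J : Finset I} {p : M →ₗ[R] M}
    (hp : ∀ i, p (b i) = if i ∈ J then b i else 0) {s : Set.powersetCard I r}
    (hs : (s : Finset I) ⊆ J) :
    (b.exteriorPower r).coord s ∘ₗ map r p = (b.exteriorPower r).coord s := by
  refine (b.exteriorPower r).ext fun t => ?_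
  rw [LinearMap.comp_apply, map_basis_of_apply_basis b hp]
  split_ifs with ht
  · rfl
  · rw [map_zero, Basis.coord_apply, Basis.repr_self, Finsupp.single_eq_of_ne]
    rintro rfl
    exact ht hs

end exteriorPower

theorem exteriorPower.exists_finrank_mul_choose_le_finrank_map_mul_choose {K M I : Type*}
    [Field K] [AddCommGroup M] [Module K M] [LinearOrder I] [Fintype I] (b : Basis I K M)
    (P : Finset I → M →ₗ[K] M)
    (hP : ∀ J i, P J (b i) = if i ∈ J then b i else 0) {r m : ℕ} (hrm : r ≤ m)
    (hm : m ≤ Fintype.card I) (W : Submodule K (⋀[K]^r M)) :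
    ∃ J : Finset I, J.card = m ∧
      finrank K W * m.choose r ≤
        finrank K (W.map (exteriorPower.map r (P J))) * (Fintype.card I).choose r := by
  have := b.finiteDimensional_of_finite
  obtain ⟨S, hS, hScard⟩ := (b.exteriorPower r).exists_finset_linearIndepOn_dualMap_coord W
  obtain ⟨J, hJ, hle⟩ := exists_card_mul_choose_le_card_filter_subset_mul
    (S := S.map (Function.Embedding.subtype _))
    (by simp only [mem_map]; rintro _ ⟨s, -, rfl⟩; exact s.2) hrm hm
  refine ⟨J, hJ, ?_⟩
  rw [← hScard, ← card_map (Function.Embedding.subtype _)]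
  refine hle.trans (Nat.mul_le_mul_right _ ?_)
  rw [filter_map, card_map]
  exact (hS.mono (mod_cast filter_subset _ S)).card_le_finrank_map _
    fun s hs => coord_comp_map_of_subset b (hP J) (mem_filter.mp hs).2

theorem projMap_col {n : ℕ} {F : Matrix (Fin n) (Fin n) ℝ} (hF : IsUnit F)
    (J : Finset (Fin n)) (j : Fin n) :
    projMap n F J (F.col j) = if j ∈ J then F.col j else 0 := by
  rw [← Matrix.mulVec_single_one, projMap, Matrix.toLin'_apply, Matrix.mulVec_mulVec,
    Matrix.mul_assoc, Matrix.nonsing_inv_mul F ((Matrix.isUnit_iff_isUnit_det F).mp hF),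
    Matrix.mul_one,
    ← Matrix.mulVec_mulVec, Matrix.diagonal_mulVec_single]
  split_ifs <;> simp

theorem exists_projection_preserving_fraction_general (n r d : ℕ) (hrd : r ≤ n - d)
    (W : Submodule ℝ (ExteriorAlgebra ℝ (Fin n → ℝ)))
    (hWle : W ≤ ⋀[ℝ]^r (Fin n → ℝ))
    (F : Matrix (Fin n) (Fin n) ℝ) (hF : IsUnit F) :
    ∃ J : Finset (Fin n), J.card = n - d ∧
      (Module.finrank ℝ (projImage n F J W) : ℝ) / ((n - d).choose r) ≥
        (Module.finrank ℝ W : ℝ) / (n.choose r) := by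
  let b : Basis (Fin n) ℝ (Fin n → ℝ) :=
    (Pi.basisFun ℝ (Fin n)).map (Matrix.toLinearEquiv' F hF.invertible)
  have hb : ∀ j, b j = F.col j := fun j => by simp [b, Matrix.toLinearEquiv']
  obtain ⟨J, hJ, hle⟩ := exteriorPower.exists_finrank_mul_choose_le_finrank_map_mul_choose b
    (projMap n F) (fun J j => by simpa only [hb] using projMap_col hF J j) hrd
    ((Fintype.card_fin n).symm ▸ Nat.sub_le n d) (W.comap (⋀[ℝ]^r (Fin n → ℝ)).subtype)
  rw [Fintype.card_fin, exteriorPower.finrank_map_comap_subtype r _ hWle,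
    Submodule.finrank_comap_subtype_of_le hWle] at hle
  refine ⟨J, hJ, ?_⟩
  rw [ge_iff_le, div_le_div_iff₀ (mod_cast Nat.choose_pos (hrd.trans (Nat.sub_le n d)))
    (mod_cast Nat.choose_pos hrd)]
  exact_mod_cast hle

/-- For `0 < r ≤ n - d`, `W ⊆ ⋀^r ℝ^n` and invertible `F`, some projection onto an
`(n-d)`-subset of the basis preserves the dimensional fraction. -/
theorem exists_projection_preserving_fraction (n r d : ℕ) (hr : 0 < r) (hrd : r ≤ n - d)
    (W : Submodule ℝ (ExteriorAlgebra ℝ (Fin n → ℝ)))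
    (hWle : W ≤ ⋀[ℝ]^r (Fin n → ℝ))
    (F : Matrix (Fin n) (Fin n) ℝ) (hF : IsUnit F) :
    ∃ J : Finset (Fin n), J.card = n - d ∧
      (Module.finrank ℝ (projImage n F J W) : ℝ) / ((n - d).choose r) ≥
        (Module.finrank ℝ W : ℝ) / (n.choose r) :=
  exists_projection_preserving_fraction_general n r d hrd W hWle F hF
end

section
/- Let V = ℝ^n, suppose 0 < r ≤ n - d ≤ n with d ≥ 0, let W be a linear subspace of ⋀^r V, and let F be an invertible n×n real matrix. Then dim(W ∧ ⋀^d V) / C(n, r+d) ≥ (1 / C(n, n-d)) · Σ_J [dim π^F_J(W) / C(n-d, r)], where the sum is over all subsets J of {1,…,n} with |J| = n - d. -/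
open Finset Matrix Module Submodule Set.powersetCard

theorem LinearMap.finrank_map_eq_of_disjoint_ker {K M N : Type*} [Field K] [AddCommGroup M]
    [Module K M] [AddCommGroup N] [Module K N] {f : M →ₗ[K] N} {p : Submodule K M}
    (h : Disjoint p (LinearMap.ker f)) : finrank K (p.map f) = finrank K p := by
  rw [← LinearMap.range_domRestrict]
  refine LinearMap.finrank_range_of_inj fun x y hxy => ?_
  exact Subtype.ext (LinearMap.injOn_of_disjoint_ker le_rfl h x.2 y.2 hxy)

theorem Finset.sum_card_filter_compl_subset {α : Type*} [Fintype α] [DecidableEq α] {m d : ℕ}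
    (s : Finset (Finset α)) (hs : ∀ T ∈ s, #T = m) (hd : d ≤ Fintype.card α) :
    ∑ J ∈ powersetCard (Fintype.card α - d) univ, #(s.filter (Jᶜ ⊆ ·)) = #s * m.choose d := by
  have hcompl : ∑ J ∈ powersetCard (Fintype.card α - d) univ, #(s.filter (Jᶜ ⊆ ·)) =
      ∑ K ∈ powersetCard d univ, #(s.filter (K ⊆ ·)) := by
    refine sum_nbij' compl compl (fun J hJ => ?_) (fun K hK => ?_) (fun J _ => compl_compl J)
      (fun K _ => compl_compl K) (fun J _ => rfl)
    · rw [mem_powersetCard_univ] at hJ ⊢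
      rw [card_compl, hJ]
      omega
    · rw [mem_powersetCard_univ] at hK ⊢
      rw [card_compl, hK]
  rw [hcompl, ← sum_const_nat fun T hT => ?_]
  · exact sum_card_bipartiteAbove_eq_sum_card_bipartiteBelow _
  · have : (powersetCard d univ).filter (· ⊆ T) = T.powersetCard d := by
      ext K
      simp [mem_powersetCard, and_comm]
    simp [bipartiteBelow, this, hs T hT]

namespace Module.Basis

variable {ι K V : Type*} [Field K] [AddCommGroup V] [Module K V]

theorem exists_finset_card_le_finrank_forall_repr_eq_zero [Finite ι] (b : Basis ι K V)
    (U : Submodule K V) {A : Set ι} (hU : U ≤ span K (b '' A)) :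
    ∃ s : Finset ι, ↑s ⊆ A ∧ #s ≤ finrank K U ∧
      ∀ u ∈ U, (∀ i ∈ s, b.repr u i = 0) → u = 0 := by
  classical
  have := Fintype.ofFinite ι
  have : FiniteDimensional K V := b.finiteDimensional_of_finite
  let φ : ι → Dual K U := fun i => b.coord i ∘ₗ U.subtype
  obtain ⟨κ, a, ha, hspan, hli⟩ := exists_linearIndependent' K φ
  have := hli.finite
  have := Fintype.ofFinite κ
  refine ⟨Finset.univ.image a, ?_, ?_, ?_⟩
  · rintro _ hi
    obtain ⟨k, -, rfl⟩ := Finset.mem_image.mp hi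
    obtain ⟨u, hu⟩ : ∃ u, φ (a k) u ≠ 0 := by
      by_contra! h
      exact hli.ne_zero k (LinearMap.ext h)
    exact (b.mem_span_image.mp (hU u.2)) (Finsupp.mem_support_iff.mpr hu)
  · rw [Finset.card_image_of_injective _ ha, Finset.card_univ, ← Subspace.dual_finrank_eq]
    exact hli.fintype_card_le_finrank
  · intro u hu hs
    have hker : span K (Set.range φ) ≤ LinearMap.ker (Dual.eval K U ⟨u, hu⟩) := by
      rw [← hspan, span_le]
      rintro _ ⟨k, rfl⟩
      exact hs _ (Finset.mem_image_of_mem a (Finset.mem_univ k))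
    refine b.repr.injective (Finsupp.ext fun i => ?_)
    simpa [φ] using hker (subset_span ⟨i, rfl⟩)

theorem finrank_inf_span_image_le [Fintype ι] (b : Basis ι K V) {U : Submodule K V}
    {s : Finset ι} (hs : ∀ u ∈ U, (∀ i ∈ s, b.repr u i = 0) → u = 0)
    (A : Set ι) [DecidablePred (· ∈ A)] :
    finrank K ↥(U ⊓ span K (b '' A)) ≤ #(s.filter (· ∈ A)) := by
  let g : ↥(U ⊓ span K (b '' A)) →ₗ[K] (s.filter (· ∈ A) → K) :=
    LinearMap.pi fun i => b.coord i ∘ₗ Submodule.subtype _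
  have hg : Function.Injective g := by
    rw [← LinearMap.ker_eq_bot, LinearMap.ker_eq_bot']
    intro x hx
    refine Subtype.ext (hs x x.2.1 fun i hi => ?_)
    by_cases hiA : i ∈ A
    · simpa [g] using congr_fun hx ⟨i, Finset.mem_filter.mpr ⟨hi, hiA⟩⟩
    · exact Finsupp.notMem_support_iff.mp fun h => hiA (b.mem_span_image.mp x.2.2 h)
  simpa using LinearMap.finrank_le_finrank_of_injective hg

end Module.Basis

namespace ExteriorAlgebra

section CommRing

variable {I R M : Type*} [LinearOrder I] [CommRing R] [AddCommGroup M] [Module R M]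
  (b : Basis I R M)

theorem basis_mem_exteriorPower (s : Finset I) : b.ExteriorAlgebra s ∈ ⋀[R]^s.card M :=
  (basis_eq_coe_basis b (ofCard (rfl : s.card = _))).symm ▸ SetLike.coe_mem _

theorem exteriorPower_le_span_basis (k : ℕ) :
    ⋀[R]^k M ≤ span R (b.ExteriorAlgebra '' {s | #s = k}) := by
  rw [← exteriorPower.ιMulti_family_span_fixedDegree_of_span R b.span_eq, span_le]
  rintro _ ⟨s, rfl⟩
  exact subset_span ⟨s, s.2, basis_apply_powersetCard b s⟩

theorem basis_mul_basis_of_not_disjoint {s t : Finset I} (h : ¬Disjoint s t) :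
    b.ExteriorAlgebra s * b.ExteriorAlgebra t = 0 :=
  basis_mul_of_not_disjoint b (ofCard (rfl : s.card = _)) (ofCard (rfl : t.card = _)) h

theorem exists_basis_mul_basis_of_disjoint {s t : Finset I} (h : Disjoint s t) :
    ∃ c : Rˣ, b.ExteriorAlgebra s * b.ExteriorAlgebra t = c • b.ExteriorAlgebra (s ∪ t) := by
  have h' : Disjoint (ofCard (rfl : s.card = _)).val (ofCard (rfl : t.card = _)).val := h
  refine ⟨Units.map (Int.castRingHom R).toMonoidHom (permOfDisjoint h').sign, ?_⟩
  have key := basis_mul_of_disjoint b _ _ h'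
  rw [Set.powersetCard.coe_disjUnion, Finset.disjUnion_eq_union] at key
  rw [Units.smul_def] at key ⊢
  simpa [Int.cast_smul_eq_zsmul] using key

theorem mul_basis_mem_span_basis_superset (x : ExteriorAlgebra R M) (K : Finset I) :
    x * b.ExteriorAlgebra K ∈ span R (b.ExteriorAlgebra '' {T | K ⊆ T}) := by
  have hx : x ∈ span R (Set.range b.ExteriorAlgebra) := b.ExteriorAlgebra.mem_span x
  induction hx using span_induction with
  | mem _ hy =>
    obtain ⟨s, rfl⟩ := hy
    by_cases hsK : Disjoint s K
    · obtain ⟨c, hc⟩ := exists_basis_mul_basis_of_disjoint b hsK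
      rw [hc]
      exact smul_mem _ _ (subset_span ⟨s ∪ K, Finset.subset_union_right, rfl⟩)
    · rw [basis_mul_basis_of_not_disjoint b hsK]
      exact zero_mem _
  | zero => simp
  | add _ _ _ _ hx hy => rw [add_mul]; exact add_mem hx hy
  | smul c _ _ hx => rw [smul_mul_assoc]; exact smul_mem _ c hx

theorem map_mulRight_basis_le (W : Submodule R (ExteriorAlgebra R M)) (K : Finset I) :
    W.map (LinearMap.mulRight R (b.ExteriorAlgebra K)) ≤
      (W * ⋀[R]^K.card M) ⊓ span R (b.ExteriorAlgebra '' {T | K ⊆ T}) := by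
  rintro _ ⟨w, hw, rfl⟩
  exact ⟨mul_mem_mul hw (basis_mem_exteriorPower b K), mul_basis_mem_span_basis_superset b w K⟩

theorem disjoint_span_basis_ker_mulRight_basis (K : Finset I) :
    Disjoint (span R (b.ExteriorAlgebra '' {s | Disjoint s K}))
      (LinearMap.ker (LinearMap.mulRight R (b.ExteriorAlgebra K))) := by
  rw [Set.image_eq_range]
  refine Submodule.range_ker_disjoint ?_
  choose c hc using fun s : ({s | Disjoint s K} : Set (Finset I)) =>
    exists_basis_mul_basis_of_disjoint b s.2
  have hinj : Function.Injective fun s : ({s | Disjoint s K} : Set (Finset I)) => s.1 ∪ K :=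
    fun s t hst => Subtype.ext <| by
      rw [← Finset.union_sdiff_cancel_right s.2, ← Finset.union_sdiff_cancel_right t.2]
      exact congrArg (· \ K) hst
  have hmul : (LinearMap.mulRight R (b.ExteriorAlgebra K) ∘
      fun s : ({s | Disjoint s K} : Set (Finset I)) => b.ExteriorAlgebra s) =
        c • (b.ExteriorAlgebra ∘ fun s => s.1 ∪ K) := funext hc
  rw [hmul]
  exact (b.ExteriorAlgebra.linearIndependent.comp _ hinj).units_smul c

variable {b} {f : M →ₗ[R] M} {J : Finset I}

theorem map_basis_of_apply_basis_eq_ite (hf : ∀ i, f (b i) = if i ∈ J then b i else 0)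
    (s : Finset I) : map f (b.ExteriorAlgebra s) = if s ⊆ J then b.ExteriorAlgebra s else 0 := by
  have hmem : ∀ x, ofFinEmbEquiv.symm (ofCard (rfl : s.card = _)) x ∈ s := fun x =>
    (mem_range_ofFinEmbEquiv_symm_iff_mem _ _).mp ⟨x, rfl⟩
  rw [basis_apply_ofCard b rfl, map_apply_ιMulti]
  split_ifs with hsJ
  · congr 1
    funext x
    simp [hf, hsJ (hmem x)]
  · obtain ⟨i, his, hiJ⟩ := Finset.not_subset.mp hsJ
    obtain ⟨x, hx⟩ :=
      (mem_range_ofFinEmbEquiv_symm_iff_mem (ofCard (rfl : s.card = _)) i).mpr his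
    exact AlternatingMap.map_coord_zero _ x (by simp [hx, hf, hiJ])

theorem range_map_le_span_basis (hf : ∀ i, f (b i) = if i ∈ J then b i else 0) :
    LinearMap.range (map f).toLinearMap ≤ span R (b.ExteriorAlgebra '' {s | s ⊆ J}) := by
  rw [LinearMap.range_eq_map, ← b.ExteriorAlgebra.span_eq, map_span, span_le]
  rintro _ ⟨_, ⟨s, rfl⟩, rfl⟩
  rw [AlgHom.toLinearMap_apply, map_basis_of_apply_basis_eq_ite hf]
  split_ifs with hsJ
  · exact subset_span ⟨s, hsJ, rfl⟩
  · exact zero_mem _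

theorem mulRight_basis_compl_comp_map [Fintype I]
    (hf : ∀ i, f (b i) = if i ∈ J then b i else 0) :
    LinearMap.mulRight R (b.ExteriorAlgebra Jᶜ) ∘ₗ (map f).toLinearMap =
      LinearMap.mulRight R (b.ExteriorAlgebra Jᶜ) := by
  refine b.ExteriorAlgebra.ext fun s => ?_
  rw [LinearMap.comp_apply, AlgHom.toLinearMap_apply, map_basis_of_apply_basis_eq_ite hf]
  split_ifs with hsJ
  · rfl
  · obtain ⟨i, his, hiJ⟩ := Finset.not_subset.mp hsJ
    rw [map_zero, LinearMap.mulRight_apply, basis_mul_basis_of_not_disjoint b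
      (Finset.not_disjoint_iff.mpr ⟨i, his, Finset.mem_compl.mpr hiJ⟩)]

end CommRing

theorem finrank_map_eq_finrank_map_mulRight_basis_compl {I K M : Type*} [LinearOrder I]
    [Fintype I] [Field K] [AddCommGroup M] [Module K M] {b : Basis I K M} {f : M →ₗ[K] M}
    {J : Finset I} (hf : ∀ i, f (b i) = if i ∈ J then b i else 0)
    (W : Submodule K (ExteriorAlgebra K M)) :
    finrank K (W.map (map f).toLinearMap) =
      finrank K (W.map (LinearMap.mulRight K (b.ExteriorAlgebra Jᶜ))) := by
  have hrange : LinearMap.range (map f).toLinearMap ≤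
      span K (b.ExteriorAlgebra '' {s | Disjoint s Jᶜ}) :=
    (range_map_le_span_basis hf).trans
      (span_mono (Set.image_mono fun s hs => disjoint_compl_right.mono_left hs))
  conv_rhs => rw [← mulRight_basis_compl_comp_map hf, map_comp]
  exact (LinearMap.finrank_map_eq_of_disjoint_ker
    ((disjoint_span_basis_ker_mulRight_basis b Jᶜ).mono_left
      (LinearMap.map_le_range.trans hrange))).symm

end ExteriorAlgebra

noncomputable def columnBasis {n : ℕ} {F : Matrix (Fin n) (Fin n) ℝ} (hF : IsUnit F) :
    Basis (Fin n) ℝ (Fin n → ℝ) :=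
  (Pi.basisFun ℝ (Fin n)).map (F.toLinearEquiv' hF.invertible)

theorem columnBasis_apply {n : ℕ} {F : Matrix (Fin n) (Fin n) ℝ} (hF : IsUnit F) (j : Fin n) :
    columnBasis hF j = F.col j := by
  rw [columnBasis, Basis.map_apply, Pi.basisFun_apply, ← LinearEquiv.coe_coe,
    toLinearEquiv'_apply, toLin'_apply, mulVec_single_one]

theorem projMap_columnBasis {n : ℕ} {F : Matrix (Fin n) (Fin n) ℝ} (hF : IsUnit F)
    (J : Finset (Fin n)) (j : Fin n) :
    projMap n F J (columnBasis hF j) = if j ∈ J then columnBasis hF j else 0 := by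
  rw [columnBasis_apply, ← mulVec_single_one, projMap, toLin'_apply, mulVec_mulVec,
    Matrix.mul_assoc, nonsing_inv_mul _ ((isUnit_iff_isUnit_det F).mp hF), Matrix.mul_one,
    ← mulVec_mulVec, diagonal_mulVec_single]
  split_ifs <;> simp

theorem finrank_projImage_le_card_filter {n d : ℕ} {F : Matrix (Fin n) (Fin n) ℝ}
    (hF : IsUnit F) (W : Submodule ℝ (ExteriorAlgebra ℝ (Fin n → ℝ)))
    {s : Finset (Finset (Fin n))} (hs : ∀ u ∈ W * ⋀[ℝ]^d (Fin n → ℝ),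
      (∀ T ∈ s, (columnBasis hF).ExteriorAlgebra.repr u T = 0) → u = 0)
    {J : Finset (Fin n)} (hJ : #Jᶜ = d) :
    finrank ℝ (projImage n F J W) ≤ #(s.filter (Jᶜ ⊆ ·)) := by
  set e := (columnBasis hF).ExteriorAlgebra
  have : FiniteDimensional ℝ (ExteriorAlgebra ℝ (Fin n → ℝ)) := e.finiteDimensional_of_finite
  calc finrank ℝ (projImage n F J W)
      = finrank ℝ (W.map (LinearMap.mulRight ℝ (e Jᶜ))) :=
        ExteriorAlgebra.finrank_map_eq_finrank_map_mulRight_basis_compl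
          (projMap_columnBasis hF J) W
    _ ≤ finrank ℝ ↥((W * ⋀[ℝ]^d (Fin n → ℝ)) ⊓ span ℝ (e '' {T | Jᶜ ⊆ T})) :=
        Submodule.finrank_mono (hJ ▸ ExteriorAlgebra.map_mulRight_basis_le _ W Jᶜ)
    _ ≤ #(s.filter (Jᶜ ⊆ ·)) := e.finrank_inf_span_image_le hs _

theorem one_div_choose_mul_sum_div_choose_le {ι : Type*} (t : Finset ι) (a : ι → ℕ)
    {n r d D : ℕ} (hd : d ≤ n) (hsum : ∑ J ∈ t, a J ≤ D * (r + d).choose d) :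
    1 / (n.choose (n - d) : ℝ) * ∑ J ∈ t, (a J : ℝ) / (n - d).choose r ≤
      D / n.choose (r + d) := by
  have hchoose : n.choose (n - d) * (n - d).choose r = n.choose (r + d) * (r + d).choose d := by
    rw [Nat.choose_symm hd, Nat.choose_mul (Nat.le_add_left d r), Nat.add_sub_cancel]
  have hpos : 0 < (r + d).choose d := Nat.choose_pos (Nat.le_add_left d r)
  rw [← Finset.sum_div, one_div_mul_eq_div, div_div]
  calc _ = ((∑ J ∈ t, a J : ℕ) : ℝ) / (n.choose (r + d) * (r + d).choose d : ℕ) := by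
        rw [← hchoose]; push_cast; ring
    _ ≤ ((D * (r + d).choose d : ℕ) : ℝ) / (n.choose (r + d) * (r + d).choose d : ℕ) := by
        gcongr
    _ = _ := by push_cast; field_simp

/-- For `0 < r ≤ n - d`, `W ⊆ ⋀^r ℝ^n` and invertible `F`, the dimensional fraction of
`W ∧ ⋀^d V` is at least the average over `J` of size `n - d` of the dimensional
fractions of the projections `π^F_J(W)`. -/
theorem wedge_fraction_ge_average_projection (n r d : ℕ) (hr : 0 < r) (hrd : r ≤ n - d)
    (W : Submodule ℝ (ExteriorAlgebra ℝ (Fin n → ℝ)))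
    (hWle : W ≤ ⋀[ℝ]^r (Fin n → ℝ))
    (F : Matrix (Fin n) (Fin n) ℝ) (hF : IsUnit F) :
    (Module.finrank ℝ ↥(W * ⋀[ℝ]^d (Fin n → ℝ)) : ℝ) / (n.choose (r + d)) ≥
      (1 / (n.choose (n - d) : ℝ)) *
        ∑ J ∈ Finset.powersetCard (n - d) (Finset.univ : Finset (Fin n)),
          (Module.finrank ℝ (projImage n F J W) : ℝ) / ((n - d).choose r) := by
  have hdn : d ≤ n := by omega
  set e := (columnBasis hF).ExteriorAlgebra
  set U := W * ⋀[ℝ]^d (Fin n → ℝ)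
  have hU : U ≤ span ℝ (e '' {T | #T = r + d}) :=
    ((mul_le_mul' hWle le_rfl).trans_eq (pow_add _ r d).symm).trans
      (ExteriorAlgebra.exteriorPower_le_span_basis _ _)
  obtain ⟨s, hsU, hs_card, hs⟩ := e.exists_finset_card_le_finrank_forall_repr_eq_zero U hU
  refine one_div_choose_mul_sum_div_choose_le _ _ hdn ?_
  calc _ ≤ ∑ J ∈ powersetCard (n - d) univ, #(s.filter (Jᶜ ⊆ ·)) :=
        sum_le_sum fun J hJ => finrank_projImage_le_card_filter hF W hs <| by
          rw [card_compl, mem_powersetCard_univ.mp hJ, Fintype.card_fin]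
          omega
    _ = #s * (r + d).choose d := by
        simpa using sum_card_filter_compl_subset s (fun T hT => hsU hT)
          (hdn.trans_eq (Fintype.card_fin n).symm)
    _ ≤ _ := Nat.mul_le_mul_right _ hs_card
end
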